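/- arXiv:2401.07806 — 4 statements merged into one kernel-verified Lean document; each statement's English description precedes it below -/
import Mathlib

section
/- Let μ, ν be finite measures on a measurable space Ω and a : Ω → ℝ^d a measurable map with ∫ ‖a(θ)‖² dμ(θ) < ∞ and ∫ ‖a(θ)‖² dν(θ) < ∞. Set M := AᵀA[μ] and assume M is positive definite. Then the function t ↦ Tr((AᵀA[(1−t)·μ + t·ν])⁻¹) is differentiable at t = 0, and its derivative at 0 equals ∫ (−a(θ)ᵀ M⁻² a(θ)) dν(θ) − ∫ (−a(θ)ᵀ M⁻² a(θ)) dμ(θ). That is, the Fréchet derivative of the A-optimal objective F^A[ρ] = Tr((AᵀA[ρ])⁻¹) at μ is the function θ ↦ −a(θ)ᵀ (AᵀA[μ])⁻² a(θ). -/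
open Matrix MeasureTheory

/-- The second-moment matrix `AᵀA[μ] = ∫ a(θ) a(θ)ᵀ dμ(θ)`, computed entrywise. -/
noncomputable def ATA {Ω : Type*} [MeasurableSpace Ω] (μ : Measure Ω)
    {d : ℕ} (a : Ω → Fin d → ℝ) : Matrix (Fin d) (Fin d) ℝ :=
  Matrix.of fun i j => ∫ θ, a θ i * a θ j ∂μ

set_option maxHeartbeats 1000000

attribute [local instance] Matrix.linftyOpNormedRing Matrix.linftyOpNormedAlgebra

section aux
variable {Ω : Type*} [MeasurableSpace Ω] {d : ℕ} {a : Ω → Fin d → ℝ}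

lemma entry_integrable (ρ : Measure Ω) (ha : Measurable a)
    (hint : Integrable (fun θ => ∑ i, (a θ i) ^ 2) ρ) (i j : Fin d) :
    Integrable (fun θ => a θ i * a θ j) ρ := by
  refine hint.mono' ?_ ?_
  · exact (((measurable_pi_apply i).comp ha).mul ((measurable_pi_apply j).comp ha)).aestronglyMeasurable
  · filter_upwards with θ
    have h1 : a θ i ^ 2 ≤ ∑ k, a θ k ^ 2 :=
      Finset.single_le_sum (f := fun k => a θ k ^ 2) (fun k _ => sq_nonneg _) (Finset.mem_univ i)
    have h2 : a θ j ^ 2 ≤ ∑ k, a θ k ^ 2 :=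
      Finset.single_le_sum (f := fun k => a θ k ^ 2) (fun k _ => sq_nonneg _) (Finset.mem_univ j)
    rw [Real.norm_eq_abs, abs_mul]
    nlinarith [sq_abs (a θ i), sq_abs (a θ j), abs_nonneg (a θ i), abs_nonneg (a θ j),
      sq_nonneg (|a θ i| - |a θ j|)]

lemma quad_integral (ρ : Measure Ω) (ha : Measurable a)
    (hint : Integrable (fun θ => ∑ i, (a θ i) ^ 2) ρ) (B : Matrix (Fin d) (Fin d) ℝ) :
    ∫ θ, -(a θ ⬝ᵥ B.mulVec (a θ)) ∂ρ = -(B * ATA ρ a).trace := by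
  have hI : ∀ i j, Integrable (fun θ => a θ i * a θ j) ρ := entry_integrable ρ ha hint
  have key : ∫ θ, a θ ⬝ᵥ B.mulVec (a θ) ∂ρ = (B * ATA ρ a).trace := by
    have h1 : ∀ θ, a θ ⬝ᵥ B.mulVec (a θ) = ∑ i, ∑ j, B i j * (a θ i * a θ j) := by
      intro θ
      simp only [dotProduct, Matrix.mulVec, Finset.mul_sum]
      exact Finset.sum_congr rfl fun i _ => Finset.sum_congr rfl fun j _ => by ring
    simp_rw [h1]
    rw [integral_finset_sum _ (fun i _ => integrable_finset_sum _
      (fun j _ => (hI i j).const_mul (B i j)))]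
    rw [Matrix.trace, Finset.sum_congr rfl (fun i _ => integral_finset_sum _
      (fun j _ => (hI i j).const_mul (B i j)))]
    refine Finset.sum_congr rfl fun i _ => ?_
    rw [Matrix.diag, Matrix.mul_apply]
    refine Finset.sum_congr rfl fun j _ => ?_
    rw [MeasureTheory.integral_const_mul]
    rw [ATA]
    simp only [Matrix.of_apply]
    congr 1
    exact integral_congr_ae (Filter.Eventually.of_forall fun θ => mul_comm _ _)
  calc ∫ θ, -(a θ ⬝ᵥ B.mulVec (a θ)) ∂ρ = -∫ θ, a θ ⬝ᵥ B.mulVec (a θ) ∂ρ := integral_neg _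
    _ = -(B * ATA ρ a).trace := by rw [key]

end aux

/-- Fréchet/Gateaux derivative of the A-optimal objective `F^A[ρ] = Tr((AᵀA[ρ])⁻¹)`
along the segment `(1−t)·μ + t·ν` at `t = 0`: the derivative equals
`∫ (−aᵀ M⁻² a) dν − ∫ (−aᵀ M⁻² a) dμ` with `M = AᵀA[μ]`. -/
theorem Aoptimal_gateaux_deriv
    {Ω : Type*} [MeasurableSpace Ω] (μ ν : Measure Ω)
    [IsFiniteMeasure μ] [IsFiniteMeasure ν]
    {d : ℕ} (a : Ω → Fin d → ℝ) (ha : Measurable a)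
    (hintμ : Integrable (fun θ => ∑ i, (a θ i) ^ 2) μ)
    (hintν : Integrable (fun θ => ∑ i, (a θ i) ^ 2) ν)
    (M : Matrix (Fin d) (Fin d) ℝ) (hMdef : M = ATA μ a) (hM : M.PosDef) :
    HasDerivWithinAt
      (fun t : ℝ => ((ATA ((1 - t).toNNReal • μ + t.toNNReal • ν) a)⁻¹).trace)
      ((∫ θ, -(a θ ⬝ᵥ (M⁻¹ * M⁻¹).mulVec (a θ)) ∂ν) -
        ∫ θ, -(a θ ⬝ᵥ (M⁻¹ * M⁻¹).mulVec (a θ)) ∂μ)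
      (Set.Icc (0 : ℝ) 1) 0 := by
  set N : Matrix (Fin d) (Fin d) ℝ := ATA ν a with hN
  -- the function agrees with a smooth one on [0,1]
  have hATA : ∀ t ∈ Set.Icc (0:ℝ) 1,
      ATA ((1 - t).toNNReal • μ + t.toNNReal • ν) a = M + t • (N - M) := by
    intro t ht
    obtain ⟨ht0, ht1⟩ := ht
    ext i j
    have hIμ := entry_integrable μ ha hintμ i j
    have hIν := entry_integrable ν ha hintν i j
    simp only [ATA, Matrix.of_apply, Matrix.add_apply, Matrix.smul_apply, Matrix.sub_apply,
      smul_eq_mul]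
    rw [integral_add_measure (hIμ.smul_measure_nnreal) (hIν.smul_measure_nnreal),
      integral_smul_nnreal_measure, integral_smul_nnreal_measure]
    simp only [NNReal.smul_def, smul_eq_mul]
    rw [Real.coe_toNNReal _ (by linarith), Real.coe_toNNReal _ ht0, hMdef]
    simp only [hN, ATA, Matrix.of_apply]
    ring
  -- invertibility of M
  have hMunit : IsUnit M := (Matrix.isUnit_iff_isUnit_det M).mpr
    (isUnit_iff_ne_zero.mpr hM.det_pos.ne')
  obtain ⟨u, hu⟩ := hMunit
  -- the smooth path
  have hf : HasDerivAt (fun t : ℝ => M + t • (N - M)) (N - M) 0 := by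
    exact (((hasDerivAt_id (0:ℝ)).smul_const (N - M)).const_add M).congr_deriv (one_smul _ _)
  have hf0 : M + (0:ℝ) • (N - M) = M := by simp
  have hinv : HasFDerivAt (Ring.inverse : Matrix (Fin d) (Fin d) ℝ → _)
      (-ContinuousLinearMap.mulLeftRight ℝ _ ↑u⁻¹ ↑u⁻¹) M := hu ▸ hasFDerivAt_ringInverse u
  have hu' : (↑u⁻¹ : Matrix (Fin d) (Fin d) ℝ) = M⁻¹ := by
    rw [Matrix.coe_units_inv, hu]
  rw [hu'] at hinv
  have hinv' : HasFDerivAt (Ring.inverse : Matrix (Fin d) (Fin d) ℝ → _)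
      (-ContinuousLinearMap.mulLeftRight ℝ _ M⁻¹ M⁻¹) (M + (0:ℝ) • (N - M)) := by
    rw [hf0]; exact hinv
  have hcomp : HasDerivAt (fun t : ℝ => Ring.inverse (M + t • (N - M)))
      (-(M⁻¹ * (N - M) * M⁻¹)) 0 := by
    have := hinv'.comp_hasDerivAt 0 hf
    exact this
  -- compose with trace
  have htr : HasDerivAt (fun t : ℝ => (Ring.inverse (M + t • (N - M))).trace)
      (-(M⁻¹ * (N - M) * M⁻¹)).trace 0 :=
    ((Matrix.traceLinearMap (Fin d) ℝ ℝ).toContinuousLinearMap.hasFDerivAt.comp_hasDerivAt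
      0 hcomp)
  -- identify the derivative value
  have hval : ((∫ θ, -(a θ ⬝ᵥ (M⁻¹ * M⁻¹).mulVec (a θ)) ∂ν) -
      ∫ θ, -(a θ ⬝ᵥ (M⁻¹ * M⁻¹).mulVec (a θ)) ∂μ) = (-(M⁻¹ * (N - M) * M⁻¹)).trace := by
    rw [quad_integral ν ha hintν, quad_integral μ ha hintμ, ← hMdef, ← hN]
    rw [Matrix.trace_neg, Matrix.trace_mul_cycle M⁻¹ (N - M) M⁻¹, Matrix.mul_sub,
      Matrix.trace_sub]
    ring
  rw [hval]
  refine (htr.hasDerivWithinAt).congr (fun t ht => ?_) ?_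
  · rw [hATA t ht, Matrix.nonsing_inv_eq_ringInverse]
  · rw [hATA 0 (by constructor <;> norm_num), Matrix.nonsing_inv_eq_ringInverse]
end

section
/- Let μ, ν be finite measures on a measurable space Ω and a : Ω → ℝ^d a measurable map with ∫ ‖a(θ)‖² dμ(θ) < ∞ and ∫ ‖a(θ)‖² dν(θ) < ∞. Set M := AᵀA[μ] and assume M is positive definite. Then the function t ↦ log(det(AᵀA[(1−t)·μ + t·ν])) is differentiable at t = 0, and its derivative at 0 equals ∫ a(θ)ᵀ M⁻¹ a(θ) dν(θ) − ∫ a(θ)ᵀ M⁻¹ a(θ) dμ(θ). That is, the Fréchet derivative of the D-optimal objective F^D[ρ] = log(det(AᵀA[ρ])) at μ is the function θ ↦ a(θ)ᵀ (AᵀA[μ])⁻¹ a(θ). -/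
open Matrix MeasureTheory

lemma integrable_prod_aux {Ω : Type*} [MeasurableSpace Ω] (ρ : Measure Ω)
    {d : ℕ} (a : Ω → Fin d → ℝ) (ha : Measurable a)
    (hint : Integrable (fun θ => ∑ i, (a θ i) ^ 2) ρ) (i j : Fin d) :
    Integrable (fun θ => a θ i * a θ j) ρ := by
  have hm : ∀ k : Fin d, Measurable fun θ => a θ k :=
    fun k => (measurable_pi_apply k).comp ha
  refine hint.mono ((hm i).mul (hm j)).aestronglyMeasurable
    (Filter.Eventually.of_forall fun θ => ?_)
  have h1 : ∀ k : Fin d, (a θ k) ^ 2 ≤ ∑ l, (a θ l) ^ 2 :=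
    fun k => Finset.single_le_sum (f := fun l => (a θ l) ^ 2) (fun l _ => sq_nonneg _) (Finset.mem_univ k)
  have hsum : (0:ℝ) ≤ ∑ l, (a θ l) ^ 2 := Finset.sum_nonneg fun l _ => sq_nonneg _
  have habs : |a θ i * a θ j| ≤ ∑ l, (a θ l) ^ 2 := by
    have := h1 i; have := h1 j
    rw [abs_mul]
    nlinarith [sq_nonneg (|a θ i| - |a θ j|), sq_abs (a θ i), sq_abs (a θ j),
      abs_nonneg (a θ i), abs_nonneg (a θ j)]
  simpa [Real.norm_eq_abs, abs_of_nonneg hsum, abs_mul] using habs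

lemma integral_quad_aux {Ω : Type*} [MeasurableSpace Ω] (ρ : Measure Ω)
    {d : ℕ} (a : Ω → Fin d → ℝ) (ha : Measurable a)
    (hint : Integrable (fun θ => ∑ i, (a θ i) ^ 2) ρ)
    (Q : Matrix (Fin d) (Fin d) ℝ) :
    ∫ θ, a θ ⬝ᵥ Q.mulVec (a θ) ∂ρ = (Q * ATA ρ a).trace := by
  have heq : ∀ θ, a θ ⬝ᵥ Q.mulVec (a θ) = ∑ i, ∑ j, Q i j * (a θ i * a θ j) := by
    intro θ
    simp only [dotProduct, Matrix.mulVec, Finset.mul_sum]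
    exact Finset.sum_congr rfl fun i _ => Finset.sum_congr rfl fun j _ => by ring
  simp_rw [heq]
  refine (integral_finset_sum _ (fun i _ => integrable_finset_sum _
    (fun j _ => (integrable_prod_aux ρ a ha hint i j).const_mul _))).trans ?_
  rw [Matrix.trace]
  refine Finset.sum_congr rfl fun i _ => ?_
  refine (integral_finset_sum _ (fun j _ => (integrable_prod_aux ρ a ha hint i j).const_mul _)).trans ?_
  simp only [Matrix.diag_apply, Matrix.mul_apply, ATA, Matrix.of_apply]
  refine Finset.sum_congr rfl fun j _ => ?_
  rw [integral_const_mul]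
  congr 1
  exact integral_congr_ae (Filter.Eventually.of_forall fun θ => mul_comm _ _)

lemma ATA_mix {Ω : Type*} [MeasurableSpace Ω] (μ ν : Measure Ω)
    [IsFiniteMeasure μ] [IsFiniteMeasure ν]
    {d : ℕ} (a : Ω → Fin d → ℝ) (ha : Measurable a)
    (hintμ : Integrable (fun θ => ∑ i, (a θ i) ^ 2) μ)
    (hintν : Integrable (fun θ => ∑ i, (a θ i) ^ 2) ν)
    {t : ℝ} (ht : t ∈ Set.Icc (0:ℝ) 1) :
    ATA ((1 - t).toNNReal • μ + t.toNNReal • ν) a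
      = (1 - t) • ATA μ a + t • ATA ν a := by
  obtain ⟨ht0, ht1⟩ := ht
  ext i j
  have h1 : Integrable (fun θ => a θ i * a θ j) ((1 - t).toNNReal • μ) :=
    (integrable_prod_aux μ a ha hintμ i j).smul_measure_nnreal
  have h2 : Integrable (fun θ => a θ i * a θ j) (t.toNNReal • ν) :=
    (integrable_prod_aux ν a ha hintν i j).smul_measure_nnreal
  simp only [ATA, Matrix.of_apply, Matrix.add_apply, Matrix.smul_apply, smul_eq_mul]
  rw [integral_add_measure h1 h2, integral_smul_nnreal_measure, integral_smul_nnreal_measure]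
  simp only [NNReal.smul_def, smul_eq_mul]
  rw [Real.coe_toNNReal _ (by linarith), Real.coe_toNNReal _ ht0]

/-- Fréchet/Gateaux derivative of the D-optimal objective `F^D[ρ] = log(det(AᵀA[ρ]))`
along the segment `(1−t)·μ + t·ν` at `t = 0`: the derivative equals
`∫ aᵀ M⁻¹ a dν − ∫ aᵀ M⁻¹ a dμ` with `M = AᵀA[μ]`. -/
theorem Doptimal_gateaux_deriv
    {Ω : Type*} [MeasurableSpace Ω] (μ ν : Measure Ω)
    [IsFiniteMeasure μ] [IsFiniteMeasure ν]
    {d : ℕ} (a : Ω → Fin d → ℝ) (ha : Measurable a)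
    (hintμ : Integrable (fun θ => ∑ i, (a θ i) ^ 2) μ)
    (hintν : Integrable (fun θ => ∑ i, (a θ i) ^ 2) ν)
    (M : Matrix (Fin d) (Fin d) ℝ) (hMdef : M = ATA μ a) (hM : M.PosDef) :
    HasDerivWithinAt
      (fun t : ℝ => Real.log ((ATA ((1 - t).toNNReal • μ + t.toNNReal • ν) a).det))
      ((∫ θ, a θ ⬝ᵥ M⁻¹.mulVec (a θ) ∂ν) - ∫ θ, a θ ⬝ᵥ M⁻¹.mulVec (a θ) ∂μ)
      (Set.Icc (0 : ℝ) 1) 0 := by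
  set N : Matrix (Fin d) (Fin d) ℝ := ATA ν a with hN
  set C : Matrix (Fin d) (Fin d) ℝ := M⁻¹ * (N - M) with hC
  have hdet : M.det ≠ 0 := hM.det_pos.ne'
  have hMinv : M * M⁻¹ = 1 := Matrix.mul_nonsing_inv M (isUnit_iff_ne_zero.mpr hdet)
  -- matrix factorization
  have hfact : ∀ t : ℝ, (1 - t) • M + t • N = M * (1 + t • C) := by
    intro t
    rw [Matrix.mul_add, Matrix.mul_one, Matrix.mul_smul, hC, ← Matrix.mul_assoc, hMinv,
      Matrix.one_mul]
    rw [smul_sub, sub_smul, one_smul]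
    abel
  set P : Polynomial ℝ :=
    (Matrix.det (1 + (Polynomial.X : Polynomial ℝ) • C.map Polynomial.C)).divX.divX with hP
  set g : ℝ → ℝ := fun t => 1 + C.trace * t + Polynomial.eval t P * t ^ 2 with hg
  have hdetg : ∀ t : ℝ, (1 + t • C).det = g t := fun t => Matrix.det_one_add_smul t C
  -- derivative of g
  have hg0 : g 0 = 1 := by simp [hg]
  have hgd : HasDerivAt g C.trace 0 := by
    have h1 : HasDerivAt (fun t : ℝ => C.trace * t) C.trace 0 := by
      simpa using (hasDerivAt_id (0:ℝ)).const_mul C.trace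
    have h2 : HasDerivAt (fun t : ℝ => Polynomial.eval t P * t ^ 2) 0 0 := by
      simpa using (P.hasDerivAt (0:ℝ)).fun_mul (hasDerivAt_pow 2 (0:ℝ))
    simpa using ((hasDerivAt_const (0:ℝ) (1:ℝ)).fun_add h1).fun_add h2
  have hF : HasDerivAt (fun t => Real.log (M.det * g t)) C.trace 0 := by
    have h := (hgd.const_mul M.det).log (by simp [hg0, hdet])
    convert h using 1
    rw [hg0, mul_one, mul_comm, mul_div_assoc, div_self hdet, mul_one]
  have hcongr : ∀ t ∈ Set.Icc (0:ℝ) 1,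
      Real.log ((ATA ((1 - t).toNNReal • μ + t.toNNReal • ν) a).det)
        = Real.log (M.det * g t) := by
    intro t ht
    rw [ATA_mix μ ν a ha hintμ hintν ht, ← hMdef, ← hN, hfact t, Matrix.det_mul, hdetg]
  have final := (hF.hasDerivWithinAt).congr hcongr (hcongr 0 ⟨le_refl 0, zero_le_one⟩)
  refine final.congr_deriv ?_
  rw [integral_quad_aux ν a ha hintν M⁻¹, integral_quad_aux μ a ha hintμ M⁻¹,
    ← hN, ← hMdef, hC, Matrix.mul_sub, Matrix.trace_sub]
end

section
/- Let a : ℝ^k → ℝ^d be differentiable at points θ₁, …, θ_d ∈ ℝ^k such that the vectors a(θ₁), …, a(θ_d) are pairwise orthogonal and nonzero, and such that for every j and every direction v ∈ ℝ^k, ⟨(Da)(θ_j)(v), a(θ_j)⟩ = 0. Let α₁, …, α_d be positive reals with Σ αᵢ = 1, and set M := Σ_{i=1}^d αᵢ a(θᵢ) a(θᵢ)ᵀ. Then for each j, the function θ ↦ a(θ)ᵀ M⁻² a(θ) is differentiable at θ_j with Fréchet derivative zero, i.e., its gradient vanishes at every θ_j. -/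
open Matrix

/-- Proposition 4.2, A-optimal case: under the orthogonality assumptions, the
Fréchet derivative of `θ ↦ a(θ)ᵀ M⁻² a(θ)` vanishes at every support point `θⱼ`. -/
theorem Aoptimal_first_order_criticality
    {k d : ℕ} (a : (Fin k → ℝ) → (Fin d → ℝ)) (θp : Fin d → (Fin k → ℝ))
    (Da : Fin d → ((Fin k → ℝ) →L[ℝ] (Fin d → ℝ)))
    (ha : ∀ j, HasFDerivAt a (Da j) (θp j))
    (horth : ∀ i j, i ≠ j → a (θp i) ⬝ᵥ a (θp j) = 0)
    (hne : ∀ i, a (θp i) ≠ 0)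
    (hperp : ∀ j, ∀ v : Fin k → ℝ, Da j v ⬝ᵥ a (θp j) = 0)
    (α : Fin d → ℝ) (hα : ∀ i, 0 < α i) (hsum : ∑ i, α i = 1)
    (M : Matrix (Fin d) (Fin d) ℝ)
    (hM : M = ∑ i : Fin d, α i • vecMulVec (a (θp i)) (a (θp i))) :
    ∀ j, HasFDerivAt (fun θ => a θ ⬝ᵥ (M⁻¹ * M⁻¹).mulVec (a θ))
      (0 : (Fin k → ℝ) →L[ℝ] ℝ) (θp j) := by
  intro j
  set N : Matrix (Fin d) (Fin d) ℝ := M⁻¹ * M⁻¹ with hNdef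
  set b : Fin d → ℝ := a (θp j) with hbdef
  set L : (Fin k → ℝ) →L[ℝ] (Fin d → ℝ) := Da j with hLdef
  -- M is symmetric
  have hMsymm : Mᵀ = M := by
    rw [hM, Matrix.transpose_sum]
    refine Finset.sum_congr rfl fun i _ => ?_
    rw [Matrix.transpose_smul]
    congr 1
    ext r c
    simp [Matrix.vecMulVec_apply, mul_comm]
  -- N is symmetric
  have hNsymm : Nᵀ = N := by
    rw [hNdef, Matrix.transpose_mul, Matrix.transpose_nonsing_inv, hMsymm]
  -- b is an eigenvector of M
  have hbb : (0:ℝ) < b ⬝ᵥ b := by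
    have := hne j
    have h1 : b ⬝ᵥ b ≠ 0 := by
      intro h0
      apply hne j
      ext i
      have : ∑ m, b m * b m = 0 := h0
      have hnn : ∀ m ∈ Finset.univ, (0:ℝ) ≤ b m * b m := fun m _ => mul_self_nonneg _
      have := (Finset.sum_eq_zero_iff_of_nonneg hnn).1 this i (Finset.mem_univ i)
      have := mul_self_eq_zero.1 this
      simpa using this
    have h2 : (0:ℝ) ≤ b ⬝ᵥ b := Finset.sum_nonneg fun m _ => mul_self_nonneg _
    exact lt_of_le_of_ne h2 (Ne.symm h1)
  have hMb : M.mulVec b = (α j * (b ⬝ᵥ b)) • b := by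
    ext r
    have hrow : (M *ᵥ b) r = ∑ i : Fin d, α i * (a (θp i) r * (a (θp i) ⬝ᵥ b)) := by
      rw [hM]
      simp only [Matrix.mulVec, dotProduct, Matrix.sum_apply, Matrix.smul_apply,
        Matrix.vecMulVec_apply, smul_eq_mul, Finset.sum_mul]
      rw [Finset.sum_comm (s := Finset.univ) (t := Finset.univ)
        (f := fun l i => α i * (a (θp i) r * a (θp i) l) * b l)]
      simp only [Finset.mul_sum]
      exact Finset.sum_congr rfl fun i _ => Finset.sum_congr rfl fun l _ => by ring
    rw [hrow, Finset.sum_eq_single j]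
    · simp [hbdef]; ring
    · intro i _ hij
      rw [horth i j hij]
      ring
    · simp
  -- key: N.mulVec b is a multiple of b
  obtain ⟨c, hNb⟩ : ∃ c : ℝ, N.mulVec b = c • b := by
    by_cases hdet : IsUnit M.det
    · have hc0 : α j * (b ⬝ᵥ b) ≠ 0 := ne_of_gt (mul_pos (hα j) hbb)
      have hinvb : M⁻¹.mulVec b = (α j * (b ⬝ᵥ b))⁻¹ • b := by
        have h1 : M⁻¹.mulVec (M.mulVec b) = b := by
          rw [Matrix.mulVec_mulVec, Matrix.nonsing_inv_mul M hdet, Matrix.one_mulVec]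
        rw [hMb, Matrix.mulVec_smul] at h1
        calc M⁻¹ *ᵥ b
            = ((α j * (b ⬝ᵥ b))⁻¹ * (α j * (b ⬝ᵥ b))) • (M⁻¹ *ᵥ b) := by
              rw [inv_mul_cancel₀ hc0, one_smul]
          _ = (α j * (b ⬝ᵥ b))⁻¹ • ((α j * (b ⬝ᵥ b)) • (M⁻¹ *ᵥ b)) := by
              rw [smul_smul]
          _ = (α j * (b ⬝ᵥ b))⁻¹ • b := by rw [h1]
      refine ⟨(α j * (b ⬝ᵥ b))⁻¹ * (α j * (b ⬝ᵥ b))⁻¹, ?_⟩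
      rw [hNdef, ← Matrix.mulVec_mulVec, hinvb, Matrix.mulVec_smul, hinvb,
        smul_smul]
    · refine ⟨0, ?_⟩
      rw [hNdef, Matrix.nonsing_inv_apply_not_isUnit M hdet]
      simp
  -- rewrite the function as a double sum
  have hfeq : (fun θ => a θ ⬝ᵥ N.mulVec (a θ))
      = fun θ => ∑ i, ∑ l, a θ i * (N i l * a θ l) := by
    funext θ
    simp [dotProduct, Matrix.mulVec, Finset.mul_sum]
  -- coordinate derivatives
  have hcoord : ∀ m : Fin d, HasFDerivAt (fun θ => a θ m)
      ((ContinuousLinearMap.proj m).comp L) (θp j) :=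
    fun m => (ContinuousLinearMap.proj m :
      ((Fin d → ℝ) →L[ℝ] ℝ)).hasFDerivAt.comp _ (ha j)
  -- derivative of each summand
  have hterm : ∀ i l : Fin d, HasFDerivAt (fun θ => a θ i * (N i l * a θ l))
      (b i • (N i l • ((ContinuousLinearMap.proj l).comp L))
        + (N i l * b l) • ((ContinuousLinearMap.proj i).comp L)) (θp j) := by
    intro i l
    exact (hcoord i).mul ((hcoord l).const_mul (N i l))
  have hD : HasFDerivAt (fun θ => ∑ i, ∑ l, a θ i * (N i l * a θ l))
      (∑ i, ∑ l, (b i • (N i l • ((ContinuousLinearMap.proj l).comp L))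
        + (N i l * b l) • ((ContinuousLinearMap.proj i).comp L))) (θp j) := by
    exact HasFDerivAt.fun_sum fun i _ => HasFDerivAt.fun_sum fun l _ => hterm i l
  -- the derivative is zero
  have hperpv : ∀ v, b ⬝ᵥ L v = 0 := by
    intro v
    rw [dotProduct_comm]
    exact hperp j v
  have hzero : (∑ i, ∑ l, (b i • (N i l • ((ContinuousLinearMap.proj l).comp L))
        + (N i l * b l) • ((ContinuousLinearMap.proj i).comp L)))
      = (0 : (Fin k → ℝ) →L[ℝ] ℝ) := by
    ext v
    simp only [ContinuousLinearMap.coe_sum', Finset.sum_apply,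
      ContinuousLinearMap.add_apply, ContinuousLinearMap.smul_apply,
      ContinuousLinearMap.coe_comp', Function.comp_apply,
      ContinuousLinearMap.proj_apply, ContinuousLinearMap.zero_apply, smul_eq_mul]
    have h1 : ∑ i, ∑ l, b i * (N i l * L v l) = b ⬝ᵥ N.mulVec (L v) := by
      simp [dotProduct, Matrix.mulVec, Finset.mul_sum]
    have h2 : ∑ i, ∑ l, (N i l * b l) * L v i = N.mulVec b ⬝ᵥ L v := by
      simp [dotProduct, Matrix.mulVec, Finset.sum_mul]
    have hvm : b ⬝ᵥ N.mulVec (L v) = N.mulVec b ⬝ᵥ L v := by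
      rw [Matrix.dotProduct_mulVec]
      congr 1
      rw [← Matrix.vecMul_transpose, hNsymm]
    calc ∑ i, ∑ l, (b i * (N i l * L v l) + (N i l * b l) * L v i)
        = (∑ i, ∑ l, b i * (N i l * L v l)) + ∑ i, ∑ l, (N i l * b l) * L v i := by
          rw [← Finset.sum_add_distrib]
          exact Finset.sum_congr rfl fun i _ => Finset.sum_add_distrib
      _ = N.mulVec b ⬝ᵥ L v + N.mulVec b ⬝ᵥ L v := by rw [h1, h2, hvm]
      _ = 0 := by rw [hNb]; simp [smul_dotProduct, hperpv v]
  rw [hfeq] at *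
  rw [← hzero]
  exact hD
end

section
/- Let a : ℝ^k → ℝ^d be differentiable at points θ₁, …, θ_d ∈ ℝ^k such that the vectors a(θ₁), …, a(θ_d) are pairwise orthogonal and nonzero, and such that for every j and every direction v ∈ ℝ^k, ⟨(Da)(θ_j)(v), a(θ_j)⟩ = 0. Let α₁, …, α_d be positive reals with Σ αᵢ = 1, and set M := Σ_{i=1}^d αᵢ a(θᵢ) a(θᵢ)ᵀ. Then for each j, the function θ ↦ a(θ)ᵀ M⁻¹ a(θ) is differentiable at θ_j with Fréchet derivative zero, i.e., its gradient vanishes at every θ_j. -/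
open Matrix

/-- Proposition 4.2, D-optimal case: under the orthogonality assumptions, the
Fréchet derivative of `θ ↦ a(θ)ᵀ M⁻¹ a(θ)` vanishes at every support point `θⱼ`. -/
theorem Doptimal_first_order_criticality
    {k d : ℕ} (a : (Fin k → ℝ) → (Fin d → ℝ)) (θp : Fin d → (Fin k → ℝ))
    (Da : Fin d → ((Fin k → ℝ) →L[ℝ] (Fin d → ℝ)))
    (ha : ∀ j, HasFDerivAt a (Da j) (θp j))
    (horth : ∀ i j, i ≠ j → a (θp i) ⬝ᵥ a (θp j) = 0)
    (hne : ∀ i, a (θp i) ≠ 0)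
    (hperp : ∀ j, ∀ v : Fin k → ℝ, Da j v ⬝ᵥ a (θp j) = 0)
    (α : Fin d → ℝ) (hα : ∀ i, 0 < α i) (hsum : ∑ i, α i = 1)
    (M : Matrix (Fin d) (Fin d) ℝ)
    (hM : M = ∑ i : Fin d, α i • vecMulVec (a (θp i)) (a (θp i))) :
    ∀ j, HasFDerivAt (fun θ => a θ ⬝ᵥ M⁻¹.mulVec (a θ))
      (0 : (Fin k → ℝ) →L[ℝ] ℝ) (θp j) := by
  intro j
  set u : Fin d → ℝ := a (θp j) with hu
  have hpos : ∀ i, 0 < a (θp i) ⬝ᵥ a (θp i) := by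
    intro i
    obtain ⟨m, hm⟩ := Function.ne_iff.mp (hne i)
    rw [dotProduct]
    refine Finset.sum_pos' (fun m _ => mul_self_nonneg _) ⟨m, Finset.mem_univ m, ?_⟩
    exact mul_self_pos.mpr hm
  set c : ℝ := α j * (u ⬝ᵥ u) with hc
  have hc0 : c ≠ 0 := ne_of_gt (mul_pos (hα j) (hpos j))
  -- M is symmetric
  have hMsym : Mᵀ = M := by
    rw [hM, transpose_sum]
    refine Finset.sum_congr rfl fun i _ => ?_
    ext x y
    simp [vecMulVec_apply, mul_comm]
  -- eigen relation
  have hMu : M *ᵥ u = c • u := by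
    rw [hM]
    have : (∑ i : Fin d, α i • vecMulVec (a (θp i)) (a (θp i))) *ᵥ u
        = ∑ i : Fin d, (α i * (a (θp i) ⬝ᵥ u)) • a (θp i) := by
      ext m
      simp only [Matrix.mulVec, dotProduct, Finset.sum_apply, Matrix.sum_apply,
        Matrix.smul_apply, vecMulVec_apply, smul_eq_mul, Pi.smul_apply,
        Finset.sum_mul, Finset.mul_sum]
      rw [Finset.sum_comm]
      exact Finset.sum_congr rfl fun i _ => Finset.sum_congr rfl fun l _ => by ring
    rw [this, Finset.sum_eq_single j
      (fun i _ hij => by rw [show a (θp i) ⬝ᵥ u = 0 from horth i j hij]; simp)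
      (fun h => absurd (Finset.mem_univ j) h)]
  -- invertibility of M
  set A : Matrix (Fin d) (Fin d) ℝ := Matrix.of (fun i => a (θp i)) with hA
  have hMfact : M = Aᵀ * (Matrix.diagonal α * A) := by
    rw [hM]
    ext x y
    simp only [Matrix.mul_apply, Matrix.diagonal, Matrix.sum_apply, Matrix.smul_apply,
      vecMulVec_apply, smul_eq_mul, hA, Matrix.of_apply, Matrix.transpose_apply,
      Finset.sum_mul, Finset.mul_sum]
    refine Finset.sum_congr rfl fun i _ => ?_
    rw [Finset.sum_eq_single i (fun b _ hbi => by simp [Ne.symm hbi]) (by simp)]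
    simp [mul_comm, mul_left_comm]
  have hAAT : A * Aᵀ = Matrix.diagonal (fun i => a (θp i) ⬝ᵥ a (θp i)) := by
    ext x y
    by_cases h : x = y
    · subst h; simp [Matrix.mul_apply, hA, dotProduct, Matrix.diagonal]
    · simp [Matrix.mul_apply, hA, Matrix.diagonal, h]
      have := horth x y h
      simpa [dotProduct] using this
  have hdetA : IsUnit A.det := by
    have h1 : A.det * A.det = ∏ i, (a (θp i) ⬝ᵥ a (θp i)) := by
      have := congrArg Matrix.det hAAT
      rwa [Matrix.det_mul, Matrix.det_transpose, Matrix.det_diagonal] at this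
    have h2 : A.det * A.det ≠ 0 := by
      rw [h1]
      exact Finset.prod_ne_zero_iff.mpr fun i _ => ne_of_gt (hpos i)
    exact isUnit_iff_ne_zero.mpr (fun h => by simp [h] at h2)
  have hdetM : IsUnit M.det := by
    rw [hMfact, Matrix.det_mul, Matrix.det_mul, Matrix.det_transpose, Matrix.det_diagonal]
    exact (hdetA.mul ((isUnit_iff_ne_zero.mpr
      (Finset.prod_ne_zero_iff.mpr fun i _ => ne_of_gt (hα i))).mul hdetA))
  -- M⁻¹ u = c⁻¹ u
  have hMinvu : M⁻¹ *ᵥ u = c⁻¹ • u := by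
    have h1 : M⁻¹ *ᵥ (M *ᵥ u) = u := by
      rw [Matrix.mulVec_mulVec, Matrix.nonsing_inv_mul M hdetM, Matrix.one_mulVec]
    rw [hMu, Matrix.mulVec_smul] at h1
    have := congrArg (fun x => c⁻¹ • x) h1
    simpa [smul_smul, inv_mul_cancel₀ hc0] using this
  have hMinvsym : M⁻¹ᵀ = M⁻¹ := by
    rw [Matrix.transpose_nonsing_inv, hMsym]
  -- coordinate derivatives
  have hcoord : ∀ i : Fin d, HasFDerivAt (fun θ => a θ i)
      ((ContinuousLinearMap.proj i).comp (Da j)) (θp j) :=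
    fun i => ((ContinuousLinearMap.proj (R := ℝ) (φ := fun _ : Fin d => ℝ) i).hasFDerivAt).comp
      (θp j) (ha j)
  -- derivative of the quadratic form
  set D' : (Fin k → ℝ) →L[ℝ] ℝ :=
    ∑ i : Fin d, ∑ l : Fin d, M⁻¹ i l •
      (a (θp j) i • ((ContinuousLinearMap.proj l).comp (Da j)) +
       a (θp j) l • ((ContinuousLinearMap.proj i).comp (Da j))) with hD'
  have key : HasFDerivAt (fun θ => a θ ⬝ᵥ M⁻¹.mulVec (a θ)) D' (θp j) := by
    have heq : (fun θ => a θ ⬝ᵥ M⁻¹.mulVec (a θ))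
        = fun θ => ∑ i : Fin d, ∑ l : Fin d, M⁻¹ i l * (a θ i * a θ l) := by
      funext θ
      simp [dotProduct, Matrix.mulVec, Finset.mul_sum]
      refine Finset.sum_congr rfl fun i _ => Finset.sum_congr rfl fun l _ => by ring
    rw [heq, hD']
    refine HasFDerivAt.fun_sum fun i _ => HasFDerivAt.fun_sum fun l _ => ?_
    exact ((hcoord i).mul (hcoord l)).const_mul _
  have hD0 : D' = 0 := by
    ext v
    set w : Fin d → ℝ := Da j v with hw
    have hwu : w ⬝ᵥ u = 0 := hperp j v
    have huw : u ⬝ᵥ w = 0 := by rw [dotProduct_comm]; exact hwu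
    simp only [hD', ContinuousLinearMap.coe_sum', Finset.sum_apply,
      ContinuousLinearMap.smul_apply, ContinuousLinearMap.add_apply,
      ContinuousLinearMap.coe_comp', Function.comp_apply,
      ContinuousLinearMap.proj_apply, ContinuousLinearMap.zero_apply, smul_eq_mul]
    have expand : ∑ i : Fin d, ∑ l : Fin d,
        M⁻¹ i l * (a (θp j) i * (Da j v) l + a (θp j) l * (Da j v) i)
        = u ⬝ᵥ (M⁻¹ *ᵥ w) + w ⬝ᵥ (M⁻¹ *ᵥ u) := by
      simp [dotProduct, Matrix.mulVec, Finset.mul_sum, ← Finset.sum_add_distrib, hw, hu]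
      refine Finset.sum_congr rfl fun i _ => Finset.sum_congr rfl fun l _ => by ring
    rw [expand]
    have h1 : u ⬝ᵥ (M⁻¹ *ᵥ w) = c⁻¹ * (u ⬝ᵥ w) := by
      rw [Matrix.dotProduct_mulVec, ← Matrix.mulVec_transpose, hMinvsym, hMinvu,
        smul_dotProduct, smul_eq_mul]
    have h2 : w ⬝ᵥ (M⁻¹ *ᵥ u) = c⁻¹ * (w ⬝ᵥ u) := by
      rw [hMinvu, dotProduct_smul, smul_eq_mul]
    rw [h1, h2, huw, hwu]
    ring
  rw [← hD0]
  exact key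
end
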